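/- Nonnegativity and tightness of the penalty on the relaxed set: fix an edge set E and k ∈ {1,2,3} with C_1 the PSD cone, C_2 = C2(E), C_3 = C3(E). Let M be Hermitian with tr(H M) ≥ 0 for all H ∈ C_k (i.e., M is in the dual cone D_k), and let x0 = (v0, p0 + i·q0, s⃗0, s⃖0). Suppose W − v v* ∈ C_k, o_g ≥ p_g² and r_g ≥ q_g² for all g, f⃗_l ≥ |s⃗_l|² and f⃖_l ≥ |s⃖_l|² for all l. Then κ_{M,x0}(W, o, r, f⃗, f⃖, v, p + i·q, s⃗, s⃖) = tr((W − v v*) M) + (v − v0)* M (v − v0) + Σ_g (o_g − p_g²) + Σ_g (r_g − q_g²) + Σ_l (f⃗_l − |s⃗_l|²) + Σ_l (f⃖_l − |s⃖_l|²) + ‖p − p0‖₂² + ‖q − q0‖₂² + ‖s⃗ − s⃗0‖₂² + ‖s⃖ − s⃖0‖₂² ≥ 0; moreover κ_{M,x0} = 0 implies o = p², r = q², f⃗ = |s⃗|², f⃖ = |s⃖|² (entrywise), p = p0, q = q0, s⃗ = s⃗0, s⃖ = s⃖0, and tr((W − v v*) M) = 0. -/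

import Mathlib

open Matrix Finset
open scoped ComplexConjugate ComplexOrder

/-- The PSD cone `C1`. -/
def PSDCone (n : ℕ) : Set (Matrix (Fin n) (Fin n) ℂ) := {H | H.PosSemidef}

/-- The SOCP cone `C2(E)`. -/
def SOCPCone (n : ℕ) (E : Set (Fin n × Fin n)) : Set (Matrix (Fin n) (Fin n) ℂ) :=
  {H | H.IsHermitian ∧ (∀ i, 0 ≤ (H i i).re) ∧
    ∀ e ∈ E, Complex.normSq (H e.1 e.2) ≤ (H e.1 e.1).re * (H e.2 e.2).re}

/-- The parabolic cone `C3(E)`. -/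
def ParabolicCone (n : ℕ) (E : Set (Fin n × Fin n)) : Set (Matrix (Fin n) (Fin n) ℂ) :=
  {H | H.IsHermitian ∧ (∀ i, 0 ≤ (H i i).re) ∧
    ∀ e ∈ E, 2 * |(H e.1 e.2).re| ≤ (H e.1 e.1).re + (H e.2 e.2).re ∧
      2 * |(H e.1 e.2).im| ≤ (H e.1 e.1).re + (H e.2 e.2).re}

/-- The rank-one Hermitian matrix `v v*`. -/
noncomputable def outerC {n : ℕ} (v : Fin n → ℂ) : Matrix (Fin n) (Fin n) ℂ :=
  Matrix.vecMulVec v (star v)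

/-- The penalty function `κ_{M,x0}`. -/
noncomputable def penalty {n m t : ℕ} (M : Matrix (Fin n) (Fin n) ℂ)
    (v0 : Fin n → ℂ) (p0 q0 : Fin m → ℝ) (sf0 st0 : Fin t → ℂ)
    (W : Matrix (Fin n) (Fin n) ℂ) (o r : Fin m → ℝ) (ff ft : Fin t → ℝ)
    (v : Fin n → ℂ) (p q : Fin m → ℝ) (sf st : Fin t → ℂ) : ℝ :=
  ((∑ g, o g) - 2 * (∑ g, p0 g * p g) + (∑ g, p0 g ^ 2))
  + ((∑ g, r g) - 2 * (∑ g, q0 g * q g) + (∑ g, q0 g ^ 2))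
  + ((∑ l, ff l) - ((∑ l, conj (sf0 l) * sf l) + (∑ l, conj (sf l) * sf0 l)).re
      + ((∑ l, conj (sf0 l) * sf0 l)).re)
  + ((∑ l, ft l) - ((∑ l, conj (st0 l) * st l) + (∑ l, conj (st l) * st0 l)).re
      + ((∑ l, conj (st0 l) * st0 l)).re)
  + (((W * M).trace).re - (star v0 ⬝ᵥ M *ᵥ v + star v ⬝ᵥ M *ᵥ v0).re
      + (star v0 ⬝ᵥ M *ᵥ v0).re)

/-!
Completing the square in each block of variables writes `κ` as the displayed sum. On the relaxed
set each summand is nonnegative: `tr((W − v v*) M)` by duality; `(v − v0)* M (v − v0)` is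
`tr(u u* M)` for `u = v − v0`, and the rank-one matrix `u u*` lies in `C1` and `C2(E)`, while
`C2(E) ⊆ C3(E)`, so duality applies again; the other terms are slacks or squares. A vanishing
sum of nonnegative terms forces each one to vanish.
-/

lemma trace_outerC_mul {n : ℕ} (v : Fin n → ℂ) (M : Matrix (Fin n) (Fin n) ℂ) :
    (outerC v * M).trace = star v ⬝ᵥ M *ᵥ v := by
  rw [outerC, vecMulVec_mul, trace_vecMulVec, dotProduct_comm, dotProduct_mulVec]

lemma outerC_mem_PSDCone {n : ℕ} (v : Fin n → ℂ) : outerC v ∈ PSDCone n :=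
  posSemidef_vecMulVec_self_star v

lemma re_outerC_apply_self {n : ℕ} (v : Fin n → ℂ) (i : Fin n) :
    (outerC v i i).re = Complex.normSq (v i) := by
  simp [outerC, vecMulVec_apply, Complex.mul_conj]

lemma outerC_mem_SOCPCone {n : ℕ} (E : Set (Fin n × Fin n)) (v : Fin n → ℂ) :
    outerC v ∈ SOCPCone n E := by
  refine ⟨(outerC_mem_PSDCone v).1, fun i => ?_, fun e _ => ?_⟩
  · rw [re_outerC_apply_self]
    exact Complex.normSq_nonneg _
  · rw [re_outerC_apply_self, re_outerC_apply_self, outerC, vecMulVec_apply, Pi.star_apply,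
      Complex.normSq_mul, Complex.star_def, Complex.normSq_conj]

lemma SOCPCone_subset_ParabolicCone {n : ℕ} (E : Set (Fin n × Fin n)) :
    SOCPCone n E ⊆ ParabolicCone n E := by
  rintro H ⟨hH, hdiag, hE⟩
  refine ⟨hH, hdiag, fun e he => ?_⟩
  -- `|Re h|, |Im h| ≤ |h| ≤ √(ab) ≤ (a + b) / 2`
  have key : ∀ x : ℝ, x ^ 2 ≤ Complex.normSq (H e.1 e.2) →
      2 * |x| ≤ (H e.1 e.1).re + (H e.2 e.2).re := fun x hx => by
    have := hE e he
    nlinarith [sq_abs x, abs_nonneg x, sq_nonneg ((H e.1 e.1).re - (H e.2 e.2).re),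
      hdiag e.1, hdiag e.2]
  exact ⟨key _ (by rw [Complex.normSq_apply]; nlinarith [sq_nonneg (H e.1 e.2).im]),
    key _ (by rw [Complex.normSq_apply]; nlinarith [sq_nonneg (H e.1 e.2).re])⟩

lemma outerC_mem_of_cone {n : ℕ} {E : Set (Fin n × Fin n)} {C : Set (Matrix (Fin n) (Fin n) ℂ)}
    (hC : C = PSDCone n ∨ C = SOCPCone n E ∨ C = ParabolicCone n E) (v : Fin n → ℂ) :
    outerC v ∈ C := by
  rcases hC with rfl | rfl | rfl
  · exact outerC_mem_PSDCone v
  · exact outerC_mem_SOCPCone E v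
  · exact SOCPCone_subset_ParabolicCone E (outerC_mem_SOCPCone E v)

lemma trace_mul_sub_cross_add_eq {n : ℕ} (M W : Matrix (Fin n) (Fin n) ℂ)
    (v v0 : Fin n → ℂ) :
    (W * M).trace - (star v0 ⬝ᵥ M *ᵥ v + star v ⬝ᵥ M *ᵥ v0) + star v0 ⬝ᵥ M *ᵥ v0 =
      ((W - outerC v) * M).trace + star (v - v0) ⬝ᵥ M *ᵥ (v - v0) := by
  rw [Matrix.sub_mul, trace_sub, trace_outerC_mul, star_sub, mulVec_sub, sub_dotProduct,
    dotProduct_sub, dotProduct_sub]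
  ring

lemma sum_sub_sq_eq {ι : Type*} [Fintype ι] (x x0 : ι → ℝ) :
    ∑ i, (x i - x0 i) ^ 2 = ∑ i, x i ^ 2 - 2 * ∑ i, x0 i * x i + ∑ i, x0 i ^ 2 := by
  have h : ∀ i, (x i - x0 i) ^ 2 = x i ^ 2 - 2 * (x0 i * x i) + x0 i ^ 2 := fun i => by ring
  simp only [h, sum_add_distrib, sum_sub_distrib, mul_sum]

lemma sum_normSq_sub_eq {ι : Type*} [Fintype ι] (s s0 : ι → ℂ) :
    ∑ i, Complex.normSq (s i - s0 i) =
      ∑ i, Complex.normSq (s i) - ((∑ i, conj (s0 i) * s i) + ∑ i, conj (s i) * s0 i).re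
        + (∑ i, conj (s0 i) * s0 i).re := by
  simp only [Complex.add_re, Complex.re_sum, ← sum_add_distrib, ← sum_sub_distrib]
  refine sum_congr rfl fun i _ => ?_
  simp only [Complex.normSq_apply, Complex.mul_re, Complex.conj_re, Complex.conj_im,
    Complex.sub_re, Complex.sub_im]
  ring

lemma penalty_eq {n m t : ℕ} (M : Matrix (Fin n) (Fin n) ℂ)
    (v0 : Fin n → ℂ) (p0 q0 : Fin m → ℝ) (sf0 st0 : Fin t → ℂ)
    (W : Matrix (Fin n) (Fin n) ℂ) (o r : Fin m → ℝ) (ff ft : Fin t → ℝ)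
    (v : Fin n → ℂ) (p q : Fin m → ℝ) (sf st : Fin t → ℂ) :
    penalty M v0 p0 q0 sf0 st0 W o r ff ft v p q sf st =
      (((W - outerC v) * M).trace).re + (star (v - v0) ⬝ᵥ M *ᵥ (v - v0)).re
        + (∑ g, (o g - p g ^ 2)) + (∑ g, (r g - q g ^ 2))
        + (∑ l, (ff l - Complex.normSq (sf l))) + (∑ l, (ft l - Complex.normSq (st l)))
        + (∑ g, (p g - p0 g) ^ 2) + (∑ g, (q g - q0 g) ^ 2)
        + (∑ l, Complex.normSq (sf l - sf0 l)) + (∑ l, Complex.normSq (st l - st0 l)) := by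
  have hmat := congrArg Complex.re (trace_mul_sub_cross_add_eq M W v v0)
  simp only [Complex.add_re, Complex.sub_re] at hmat
  rw [penalty, sum_sub_sq_eq, sum_sub_sq_eq, sum_normSq_sub_eq, sum_normSq_sub_eq]
  simp only [sum_sub_distrib, Complex.add_re]
  linear_combination hmat

lemma eq_of_sum_sub_eq_zero {ι : Type*} [Fintype ι] {f g : ι → ℝ} (hgf : ∀ i, g i ≤ f i)
    (h : ∑ i, (f i - g i) = 0) : f = g := by
  have := (Fintype.sum_eq_zero_iff_of_nonneg fun i => sub_nonneg.2 (hgf i)).1 h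
  exact funext fun i => sub_eq_zero.1 (congrFun this i)

lemma eq_of_sum_sub_sq_eq_zero {ι : Type*} [Fintype ι] {x y : ι → ℝ}
    (h : ∑ i, (x i - y i) ^ 2 = 0) : x = y := by
  have := (Fintype.sum_eq_zero_iff_of_nonneg fun i => sq_nonneg (x i - y i)).1 h
  exact funext fun i => sub_eq_zero.1 (pow_eq_zero_iff two_ne_zero |>.1 (congrFun this i))

lemma eq_of_sum_normSq_sub_eq_zero {ι : Type*} [Fintype ι] {x y : ι → ℂ}
    (h : ∑ i, Complex.normSq (x i - y i) = 0) : x = y := by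
  have := (Fintype.sum_eq_zero_iff_of_nonneg fun i => Complex.normSq_nonneg (x i - y i)).1 h
  exact funext fun i => sub_eq_zero.1 (Complex.normSq_eq_zero.1 (congrFun this i))

theorem penalty_nonneg_and_tight_general {n m t : ℕ}
    (E : Set (Fin n × Fin n))
    (C : Set (Matrix (Fin n) (Fin n) ℂ))
    (hC : C = PSDCone n ∨ C = SOCPCone n E ∨ C = ParabolicCone n E)
    (M : Matrix (Fin n) (Fin n) ℂ)
    (hdual : ∀ H ∈ C, 0 ≤ ((H * M).trace).re)
    (v0 : Fin n → ℂ) (p0 q0 : Fin m → ℝ) (sf0 st0 : Fin t → ℂ)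
    (W : Matrix (Fin n) (Fin n) ℂ) (o r : Fin m → ℝ) (ff ft : Fin t → ℝ)
    (v : Fin n → ℂ) (p q : Fin m → ℝ) (sf st : Fin t → ℂ)
    (hcone : W - outerC v ∈ C)
    (ho : ∀ g, p g ^ 2 ≤ o g) (hr : ∀ g, q g ^ 2 ≤ r g)
    (hff : ∀ l, Complex.normSq (sf l) ≤ ff l)
    (hft : ∀ l, Complex.normSq (st l) ≤ ft l) :
    (penalty M v0 p0 q0 sf0 st0 W o r ff ft v p q sf st =
        (((W - outerC v) * M).trace).re + (star (v - v0) ⬝ᵥ M *ᵥ (v - v0)).re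
          + (∑ g, (o g - p g ^ 2)) + (∑ g, (r g - q g ^ 2))
          + (∑ l, (ff l - Complex.normSq (sf l))) + (∑ l, (ft l - Complex.normSq (st l)))
          + (∑ g, (p g - p0 g) ^ 2) + (∑ g, (q g - q0 g) ^ 2)
          + (∑ l, Complex.normSq (sf l - sf0 l)) + (∑ l, Complex.normSq (st l - st0 l))) ∧
    (0 ≤ penalty M v0 p0 q0 sf0 st0 W o r ff ft v p q sf st) ∧
    (penalty M v0 p0 q0 sf0 st0 W o r ff ft v p q sf st = 0 →
      (o = fun g => p g ^ 2) ∧ (r = fun g => q g ^ 2) ∧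
      (ff = fun l => Complex.normSq (sf l)) ∧ (ft = fun l => Complex.normSq (st l)) ∧
      p = p0 ∧ q = q0 ∧ sf = sf0 ∧ st = st0 ∧
      (((W - outerC v) * M).trace).re = 0) := by
  have hW := hdual _ hcone
  have hv : 0 ≤ (star (v - v0) ⬝ᵥ M *ᵥ (v - v0)).re := by
    simpa only [trace_outerC_mul] using hdual _ (outerC_mem_of_cone hC (v - v0))
  have ho' : 0 ≤ ∑ g, (o g - p g ^ 2) := sum_nonneg fun g _ => sub_nonneg.2 (ho g)
  have hr' : 0 ≤ ∑ g, (r g - q g ^ 2) := sum_nonneg fun g _ => sub_nonneg.2 (hr g)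
  have hff' : 0 ≤ ∑ l, (ff l - Complex.normSq (sf l)) :=
    sum_nonneg fun l _ => sub_nonneg.2 (hff l)
  have hft' : 0 ≤ ∑ l, (ft l - Complex.normSq (st l)) :=
    sum_nonneg fun l _ => sub_nonneg.2 (hft l)
  have hp : 0 ≤ ∑ g, (p g - p0 g) ^ 2 := by positivity
  have hq : 0 ≤ ∑ g, (q g - q0 g) ^ 2 := by positivity
  have hsf : 0 ≤ ∑ l, Complex.normSq (sf l - sf0 l) :=
    sum_nonneg fun l _ => Complex.normSq_nonneg _
  have hst : 0 ≤ ∑ l, Complex.normSq (st l - st0 l) :=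
    sum_nonneg fun l _ => Complex.normSq_nonneg _
  rw [penalty_eq]
  refine ⟨rfl, by positivity, fun h0 => ?_⟩
  exact ⟨eq_of_sum_sub_eq_zero ho (by linarith), eq_of_sum_sub_eq_zero hr (by linarith),
    eq_of_sum_sub_eq_zero hff (by linarith), eq_of_sum_sub_eq_zero hft (by linarith),
    eq_of_sum_sub_sq_eq_zero (by linarith), eq_of_sum_sub_sq_eq_zero (by linarith),
    eq_of_sum_normSq_sub_eq_zero (by linarith), eq_of_sum_normSq_sub_eq_zero (by linarith),
    by linarith⟩

/-- Nonnegativity and tightness of the penalty on the relaxed set: whenever `W − v v*`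
lies in one of the cones `C1, C2(E), C3(E)`, `M` lies in the corresponding dual cone,
and `o ≥ p²`, `r ≥ q²`, `f⃗ ≥ |s⃗|²`, `f⃖ ≥ |s⃖|²` hold entrywise, the penalty equals the
displayed sum of nonnegative terms, is nonnegative, and can vanish only when all the
displayed slack terms vanish. -/
theorem penalty_nonneg_and_tight {n m t : ℕ}
    (E : Set (Fin n × Fin n)) (hE : ∀ e ∈ E, e.1 ≠ e.2)
    (C : Set (Matrix (Fin n) (Fin n) ℂ))
    (hC : C = PSDCone n ∨ C = SOCPCone n E ∨ C = ParabolicCone n E)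
    (M : Matrix (Fin n) (Fin n) ℂ) (hM : M.IsHermitian)
    (hdual : ∀ H ∈ C, 0 ≤ ((H * M).trace).re)
    (v0 : Fin n → ℂ) (p0 q0 : Fin m → ℝ) (sf0 st0 : Fin t → ℂ)
    (W : Matrix (Fin n) (Fin n) ℂ) (o r : Fin m → ℝ) (ff ft : Fin t → ℝ)
    (v : Fin n → ℂ) (p q : Fin m → ℝ) (sf st : Fin t → ℂ)
    (hcone : W - outerC v ∈ C)
    (ho : ∀ g, p g ^ 2 ≤ o g) (hr : ∀ g, q g ^ 2 ≤ r g)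
    (hff : ∀ l, Complex.normSq (sf l) ≤ ff l)
    (hft : ∀ l, Complex.normSq (st l) ≤ ft l) :
    (penalty M v0 p0 q0 sf0 st0 W o r ff ft v p q sf st =
        (((W - outerC v) * M).trace).re + (star (v - v0) ⬝ᵥ M *ᵥ (v - v0)).re
          + (∑ g, (o g - p g ^ 2)) + (∑ g, (r g - q g ^ 2))
          + (∑ l, (ff l - Complex.normSq (sf l))) + (∑ l, (ft l - Complex.normSq (st l)))
          + (∑ g, (p g - p0 g) ^ 2) + (∑ g, (q g - q0 g) ^ 2)
          + (∑ l, Complex.normSq (sf l - sf0 l)) + (∑ l, Complex.normSq (st l - st0 l))) ∧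
    (0 ≤ penalty M v0 p0 q0 sf0 st0 W o r ff ft v p q sf st) ∧
    (penalty M v0 p0 q0 sf0 st0 W o r ff ft v p q sf st = 0 →
      (o = fun g => p g ^ 2) ∧ (r = fun g => q g ^ 2) ∧
      (ff = fun l => Complex.normSq (sf l)) ∧ (ft = fun l => Complex.normSq (st l)) ∧
      p = p0 ∧ q = q0 ∧ sf = sf0 ∧ st = st0 ∧
      (((W - outerC v) * M).trace).re = 0) :=
  penalty_nonneg_and_tight_general E C hC M hdual v0 p0 q0 sf0 st0 W o r ff ft v p q sf st hcone ho
    hr hff hft
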